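/- arXiv:math/9912068 — 2 statements merged into one kernel-verified Lean document; each statement's English description precedes it below -/
import Mathlib

section
/- Let G be a group and let E be a minimal normal subgroup of G which is not contained in the center of G, and suppose the quotient group G/E is a nonabelian simple group. Then G is perfect: its commutator subgroup equals G. -/
open scoped Pointwise


/-- If `E` is a noncentral minimal normal subgroup of `G` and `G/E` is nonabelian
simple, then `G` is perfect. -/
theorem perfect_of_minimal_normal_simple_quotient {G : Type*} [Group G] (E : Subgroup G)
    [E.Normal] (hne : E ≠ ⊥)
    (hmin : ∀ N : Subgroup G, N.Normal → N < E → N = ⊥)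
    (hnc : ¬ E ≤ Subgroup.center G)
    (hsimple : IsSimpleGroup (G ⧸ E))
    (hnonab : ¬ ∀ a b : G ⧸ E, a * b = b * a) :
    commutator G = ⊤ := by
  classical
  set K : Subgroup G := commutator G with hK
  -- commutator of the quotient is top
  have hQ : commutator (G ⧸ E) = ⊤ := by
    rcases (Subgroup.commutator_normal (⊤ : Subgroup (G ⧸ E)) ⊤).eq_bot_or_eq_top with h | h
    · exfalso
      apply hnonab
      intro a b
      open scoped commutatorElement in
      have : ⁅a, b⁆ = 1 := by
        have hm : ⁅a, b⁆ ∈ commutator (G ⧸ E) :=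
          Subgroup.commutator_mem_commutator (Subgroup.mem_top a) (Subgroup.mem_top b)
        rw [commutator_def, h] at hm
        simpa using hm
      rwa [commutatorElement_eq_one_iff_mul_comm] at this
    · exact h
  -- K ⊔ E = ⊤
  have hmap : K.map (QuotientGroup.mk' E) = ⊤ := by
    rw [hK, commutator_def, Subgroup.map_commutator,
      Subgroup.map_top_of_surjective _ (QuotientGroup.mk'_surjective E), ← commutator_def, hQ]
  have hsup : K ⊔ E = ⊤ := by
    have := congrArg (Subgroup.comap (QuotientGroup.mk' E)) hmap
    rwa [Subgroup.comap_map_eq, QuotientGroup.ker_mk', Subgroup.comap_top] at this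
  have hKnormal : K.Normal := Subgroup.commutator_normal ⊤ ⊤
  by_cases hEK : E ≤ K
  · rw [← hsup, sup_eq_left.mpr hEK]
  · -- K ⊓ E < E, hence = ⊥
    have hlt : K ⊓ E < E := lt_of_le_of_ne inf_le_right (fun h => hEK (h ▸ inf_le_left))
    have hbot : K ⊓ E = ⊥ := hmin _ (Subgroup.normal_inf_normal K E) hlt
    -- ⁅E, E⁆ = ⊥ and ⁅E, K⁆ = ⊥
    have hEE : ⁅E, E⁆ = ⊥ := by
      have h1 : ⁅E, E⁆ ≤ K := by
        rw [hK, commutator_def]; exact Subgroup.commutator_mono le_top le_top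
      have h2 : ⁅E, E⁆ ≤ E := Subgroup.commutator_le_right E E
      exact le_bot_iff.mp (hbot ▸ le_inf h1 h2)
    have hEKc : ⁅E, K⁆ = ⊥ :=
      le_bot_iff.mp (hbot ▸ le_inf (Subgroup.commutator_le_right E K) (Subgroup.commutator_le_left E K))
    -- then E ≤ center G, contradiction
    exfalso
    apply hnc
    have hcE : E ≤ Subgroup.centralizer E := by
      rwa [← Subgroup.commutator_eq_bot_iff_le_centralizer]
    have hcK : E ≤ Subgroup.centralizer K := by
      rwa [← Subgroup.commutator_eq_bot_iff_le_centralizer]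
    intro x hx
    rw [Subgroup.mem_center_iff]
    intro g
    have hg : g ∈ K ⊔ E := hsup ▸ Subgroup.mem_top g
    have : (g : G) ∈ ((K : Set G) * (E : Set G) : Set G) := by
      rw [← Subgroup.mul_normal]; exact hg
    obtain ⟨k, hk, e, he, rfl⟩ := this
    have h1 : k * x = x * k := Subgroup.mem_centralizer_iff.mp (hcK hx) k hk
    have h2 : e * x = x * e := Subgroup.mem_centralizer_iff.mp (hcE hx) e he
    calc (k * e) * x = k * (e * x) := by rw [mul_assoc]
      _ = k * (x * e) := by rw [h2]
      _ = (k * x) * e := by rw [mul_assoc]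
      _ = (x * k) * e := by rw [h1]
      _ = x * (k * e) := by rw [mul_assoc]
end

section
/- Let S be a perfect group acting by automorphisms on an abelian group E, and suppose E is generated by the set of elements of the form (s • e) · e⁻¹ for s ∈ S, e ∈ E. Then the semidirect product E ⋊ S is a perfect group. -/
open scoped commutatorElement

/-- If a perfect group `S` acts on an abelian group `E` such that `E` is generated by
elements `(s • e) * e⁻¹`, then `E ⋊ S` is perfect. -/
theorem semidirectProduct_perfect {E S : Type*} [CommGroup E] [Group S]
    (φ : S →* MulAut E) (hS : commutator S = ⊤)
    (hE : Subgroup.closure {x : E | ∃ (s : S) (e : E), x = φ s e * e⁻¹} = ⊤) :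
    commutator (E ⋊[φ] S) = ⊤ := by
  have hinl : ∀ e : E, SemidirectProduct.inl (φ := φ) e ∈ commutator (E ⋊[φ] S) := by
    intro e
    have he : e ∈ Subgroup.closure {x : E | ∃ (s : S) (e : E), x = φ s e * e⁻¹} := by
      rw [hE]; trivial
    refine Subgroup.closure_induction ?_ ?_ ?_ ?_ he
    · rintro x ⟨s, e', rfl⟩
      have key : SemidirectProduct.inl (φ := φ) (φ s e' * e'⁻¹) =
          ⁅SemidirectProduct.inr (φ := φ) s, SemidirectProduct.inl (φ := φ) e'⁆ := by
        ext <;> simp [commutatorElement_def, mul_assoc]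
      rw [key]
      exact Subgroup.commutator_mem_commutator (Subgroup.mem_top _) (Subgroup.mem_top _)
    · simpa using (commutator (E ⋊[φ] S)).one_mem
    · intro x y _ _ hx hy
      simpa using (commutator (E ⋊[φ] S)).mul_mem hx hy
    · intro x _ hx
      simpa using (commutator (E ⋊[φ] S)).inv_mem hx
  have hinr : ∀ s : S, SemidirectProduct.inr (φ := φ) s ∈ commutator (E ⋊[φ] S) := by
    intro s
    have hs : s ∈ commutator S := by rw [hS]; trivial
    have : (commutator S).map (SemidirectProduct.inr (φ := φ)) ≤ commutator (E ⋊[φ] S) := by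
      rw [commutator_def, Subgroup.map_commutator]
      exact Subgroup.commutator_mono le_top le_top
    exact this ⟨s, hs, rfl⟩
  rw [Subgroup.eq_top_iff']
  intro g
  rw [← SemidirectProduct.inl_left_mul_inr_right g]
  exact (commutator (E ⋊[φ] S)).mul_mem (hinl _) (hinr _)
end
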